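/- Let A be a weakly monotone well-founded ordered F-algebra and ≿ a precedence on F. Define on non-variable terms s = f(s_1,…,s_m), t = g(t_1,…,t_n): s ⊒∼ t iff s >_A t, or (s ≥_A t and f ≿ g); and s ⊐ t iff s >_A t, or (s ≥_A t and f ≻ g). Then (⊒∼, ⊐) is a stable order pair: ⊒∼ is a quasi-order, ⊐ is a strict order, ⊒∼ ∘ ⊐ ∘ ⊒∼ ⊆ ⊐, and both ⊒∼ and ⊐ are closed under substitutions. -/
import Mathlib


/-- First-order terms over a signature `F` with arity function `ar` and variables `V`. -/
inductive Term (F : Type) (ar : F → ℕ) (V : Type) : Type where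
  | var : V → Term F ar V
  | app : (f : F) → (Fin (ar f) → Term F ar V) → Term F ar V

namespace Term

variable {F V : Type} {ar : F → ℕ}

/-- Application of a substitution `σ : V → Term F ar V` to a term. -/
def subst (σ : V → Term F ar V) : Term F ar V → Term F ar V
  | var v => σ v
  | app f args => app f (fun i => (args i).subst σ)

/-- Interpretation of a term in an `F`-algebra with carrier `A` under assignment `α`. -/
def eval {A : Type} (I : (f : F) → (Fin (ar f) → A) → A) (α : V → A) :
    Term F ar V → A
  | var v => α v
  | app f args => I f (fun i => (args i).eval I α)

/-- A term is a non-variable term (function application). -/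
def IsApp : Term F ar V → Prop
  | var _ => False
  | app _ _ => True

end Term

section Algebra

variable {F V A : Type}

/-- `RC lt a b` : reflexive closure of the strict order `lt`, i.e. `a ≤ b`. -/
def RC (lt : A → A → Prop) (a b : A) : Prop := lt a b ∨ a = b

variable (ar : F → ℕ) (I : (f : F) → (Fin (ar f) → A) → A) (lt : A → A → Prop)

/-- `s >_A t` : `[α](t) < [α](s)` for every assignment `α`. -/
def GTA (s t : Term F ar V) : Prop := ∀ α : V → A, lt (t.eval I α) (s.eval I α)

/-- `s ≥_A t` : `[α](t) ≤ [α](s)` for every assignment `α`. -/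
def GEA (s t : Term F ar V) : Prop := ∀ α : V → A, RC lt (t.eval I α) (s.eval I α)

/-- The algebra is simple: `f_A(a_1, …, a_n) ≥ a_i`. -/
def Simple : Prop := ∀ (f : F) (as : Fin (ar f) → A) (i : Fin (ar f)), RC lt (as i) (I f as)

/-- The algebra is weakly monotone: `a_i > b` implies
`f_A(a_1,…,a_i,…,a_n) ≥ f_A(a_1,…,b,…,a_n)`. -/
def WeaklyMonotone : Prop :=
  ∀ (f : F) (as : Fin (ar f) → A) (i : Fin (ar f)) (b : A),
    lt b (as i) → RC lt (I f (Function.update as i b)) (I f as)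

end Algebra

section WPO

variable {F V A : Type} (ar : F → ℕ) (I : (f : F) → (Fin (ar f) → A) → A)
  (lt : A → A → Prop) (prec : F → F → Prop)

mutual
  /-- The weighted path order induced by the algebra `(A, I, lt)` and the precedence `prec`. -/
  inductive WPO : Term F ar V → Term F ar V → Prop where
    /-- (1) `s >_A t`. -/
    | alg {s t} : GTA ar I lt s t → WPO s t
    /-- (2a) `s ≥_A t` and `s_i >_wpo t`. -/
    | sub {f ss t} (i : Fin (ar f)) :
        GEA ar I lt (Term.app f ss) t → WPO (ss i) t → WPO (Term.app f ss) t
    /-- (2a) `s ≥_A t` and `s_i = t`. -/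
    | subEq {f ss t} (i : Fin (ar f)) :
        GEA ar I lt (Term.app f ss) t → ss i = t → WPO (Term.app f ss) t
    /-- (2b-i) `s ≥_A t`, `s >_wpo t_j` for all `j`, and `f ≻ g`. -/
    | prc {f ss g ts} :
        GEA ar I lt (Term.app f ss) (Term.app g ts) →
        (∀ j, WPO (Term.app f ss) (ts j)) →
        prec f g → ¬ prec g f → WPO (Term.app f ss) (Term.app g ts)
    /-- (2b-ii) `s ≥_A t`, `s >_wpo t_j` for all `j`, `f ≿ g` and lex comparison of arguments. -/
    | lex {f ss g ts} :
        GEA ar I lt (Term.app f ss) (Term.app g ts) →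
        (∀ j, WPO (Term.app f ss) (ts j)) →
        prec f g → WPOLex (List.ofFn ss) (List.ofFn ts) →
        WPO (Term.app f ss) (Term.app g ts)

  /-- Lexicographic extension of `WPO` to argument lists (of possibly different lengths). -/
  inductive WPOLex : List (Term F ar V) → List (Term F ar V) → Prop where
    | head {s t l₁ l₂} : WPO s t → WPOLex (s :: l₁) (t :: l₂)
    | tail {s l₁ l₂} : WPOLex l₁ l₂ → WPOLex (s :: l₁) (s :: l₂)
    | longer {s l₁} : WPOLex (s :: l₁) []
end

end WPO

section SPO

variable {F V : Type} {ar : F → ℕ} (qge qgt : Term F ar V → Term F ar V → Prop)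

mutual
  /-- The semantic path order induced by the order pair `(qge, qgt)` (`⊒∼`, `⊐`). -/
  inductive SPO : Term F ar V → Term F ar V → Prop where
    /-- (1) `s_i >_spo t`. -/
    | sub {f ss t} (i : Fin (ar f)) : SPO (ss i) t → SPO (Term.app f ss) t
    /-- (1) `s_i = t`. -/
    | subEq {f ss t} (i : Fin (ar f)) : ss i = t → SPO (Term.app f ss) t
    /-- (2a) `s >_spo t_j` for all `j` and `s ⊐ t`. -/
    | gt {f ss g ts} : (∀ j, SPO (Term.app f ss) (ts j)) →
        qgt (Term.app f ss) (Term.app g ts) → SPO (Term.app f ss) (Term.app g ts)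
    /-- (2b) `s >_spo t_j` for all `j`, `s ⊒∼ t` and lex comparison of arguments. -/
    | lex {f ss g ts} : (∀ j, SPO (Term.app f ss) (ts j)) →
        qge (Term.app f ss) (Term.app g ts) →
        SPOLex (List.ofFn ss) (List.ofFn ts) → SPO (Term.app f ss) (Term.app g ts)

  /-- Lexicographic extension of `SPO` to argument lists. -/
  inductive SPOLex : List (Term F ar V) → List (Term F ar V) → Prop where
    | head {s t l₁ l₂} : SPO s t → SPOLex (s :: l₁) (t :: l₂)
    | tail {s l₁ l₂} : SPOLex l₁ l₂ → SPOLex (s :: l₁) (s :: l₂)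
    | longer {s l₁} : SPOLex (s :: l₁) []
end

end SPO

section Props

variable {F V : Type} {ar : F → ℕ}

/-- Closure under contexts: replacing one argument. -/
def ClosedCtx (R : Term F ar V → Term F ar V → Prop) : Prop :=
  ∀ (f : F) (args : Fin (ar f) → Term F ar V) (i : Fin (ar f)) (s t : Term F ar V),
    R s t → R (Term.app f (Function.update args i s)) (Term.app f (Function.update args i t))

/-- Closure under substitutions. -/
def ClosedSubst (R : Term F ar V → Term F ar V → Prop) : Prop :=
  ∀ (σ : V → Term F ar V) (s t : Term F ar V), R s t → R (s.subst σ) (t.subst σ)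

/-- A reduction order: a well-founded strict order closed under contexts and substitutions. -/
def ReductionOrder (R : Term F ar V → Term F ar V → Prop) : Prop :=
  (∀ s, ¬ R s s) ∧ Transitive R ∧ WellFounded (fun s t => R t s) ∧
    ClosedCtx R ∧ ClosedSubst R

/-- `Subterm t s` : `t` is a subterm of `s`. -/
inductive Subterm : Term F ar V → Term F ar V → Prop where
  | refl {t} : Subterm t t
  | arg {t f ss} (i : Fin (ar f)) : Subterm t (ss i) → Subterm t (Term.app f ss)

/-- `ProperSubterm t s` : `t` is a proper subterm of `s`. -/
def ProperSubterm (t s : Term F ar V) : Prop :=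
  ∃ (f : F) (ss : Fin (ar f) → Term F ar V) (i : Fin (ar f)),
    s = Term.app f ss ∧ Subterm t (ss i)

/-- The rewrite relation of a TRS `R`: closure of the rules under substitutions and contexts. -/
inductive Rewrite (R : Set (Term F ar V × Term F ar V)) : Term F ar V → Term F ar V → Prop where
  | rule {l r} (σ : V → Term F ar V) : (l, r) ∈ R → Rewrite R (l.subst σ) (r.subst σ)
  | ctx {s t} (f : F) (args : Fin (ar f) → Term F ar V) (i : Fin (ar f)) :
      Rewrite R s t →
      Rewrite R (Term.app f (Function.update args i s)) (Term.app f (Function.update args i t))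

end Props

section Pair

variable {F V A : Type} (ar : F → ℕ) (I : (f : F) → (Fin (ar f) → A) → A)
  (lt : A → A → Prop) (prec : F → F → Prop)

/-- `s ⊒∼ t` : both non-variable, and `s >_A t`, or `s ≥_A t` and `root(s) ≿ root(t)`. -/
def QGE (s t : Term F ar V) : Prop :=
  ∃ (f : F) (ss : Fin (ar f) → Term F ar V) (g : F) (ts : Fin (ar g) → Term F ar V),
    s = Term.app f ss ∧ t = Term.app g ts ∧
      (GTA ar I lt s t ∨ (GEA ar I lt s t ∧ prec f g))

/-- `s ⊐ t` : both non-variable, and `s >_A t`, or `s ≥_A t` and `root(s) ≻ root(t)`. -/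
def QGT (s t : Term F ar V) : Prop :=
  ∃ (f : F) (ss : Fin (ar f) → Term F ar V) (g : F) (ts : Fin (ar g) → Term F ar V),
    s = Term.app f ss ∧ t = Term.app g ts ∧
      (GTA ar I lt s t ∨ (GEA ar I lt s t ∧ prec f g ∧ ¬ prec g f))

variable (Im : (f : F) → (Fin (ar f) → A) → A)

/-- Interpretation of the marked term `t♯` (root symbol interpreted by `Im`). -/
def evalSharp (α : V → A) : Term F ar V → A
  | .var v => α v
  | .app f ts => Im f (fun i => (ts i).eval I α)

/-- `s♯ >_A t♯`. -/
def GTAS (s t : Term F ar V) : Prop :=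
  ∀ α : V → A, lt (evalSharp ar I Im α t) (evalSharp ar I Im α s)

/-- `s♯ ≥_A t♯`. -/
def GEAS (s t : Term F ar V) : Prop :=
  ∀ α : V → A, RC lt (evalSharp ar I Im α t) (evalSharp ar I Im α s)

/-- Marked version of `⊒∼` : `s♯ >_A t♯`, or `s♯ ≥_A t♯` and `root(s) ≿ root(t)`. -/
def QGES (s t : Term F ar V) : Prop :=
  ∃ (f : F) (ss : Fin (ar f) → Term F ar V) (g : F) (ts : Fin (ar g) → Term F ar V),
    s = Term.app f ss ∧ t = Term.app g ts ∧
      (GTAS ar I lt Im s t ∨ (GEAS ar I lt Im s t ∧ prec f g))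

/-- Marked version of `⊐` : `s♯ >_A t♯`, or `s♯ ≥_A t♯` and `root(s) ≻ root(t)`. -/
def QGTS (s t : Term F ar V) : Prop :=
  ∃ (f : F) (ss : Fin (ar f) → Term F ar V) (g : F) (ts : Fin (ar g) → Term F ar V),
    s = Term.app f ss ∧ t = Term.app g ts ∧
      (GTAS ar I lt Im s t ∨ (GEAS ar I lt Im s t ∧ prec f g ∧ ¬ prec g f))

/-- The generalized weighted path order: `s ≥_A t` and `s >_spo t` for the SPO induced
from the marked order pair. -/
def GWPO (s t : Term F ar V) : Prop :=
  GEA ar I lt s t ∧ SPO (QGES ar I lt prec Im) (QGTS ar I lt prec Im) s t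

end Pair

theorem eval_subst {F V A : Type} {ar : F → ℕ} (I : (f : F) → (Fin (ar f) → A) → A)
    (σ : V → Term F ar V) (α : V → A) (t : Term F ar V) :
    (t.subst σ).eval I α = t.eval I (fun v => (σ v).eval I α) := by
  induction t with
  | var v => rfl
  | app f args ih => simp [Term.subst, Term.eval, ih]

/-- For a weakly monotone well-founded ordered `F`-algebra and a
precedence, the pair `(⊒∼, ⊐)` (here `QGE`, `QGT`) is a stable order pair: `⊒∼` is a
quasi-order on non-variable terms, `⊐` is a strict order, `⊒∼ ∘ ⊐ ∘ ⊒∼ ⊆ ⊐`, and both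
are closed under substitutions. -/
theorem qge_qgt_stable_order_pair
    {F V A : Type} [Fintype F] [Countable V] [Infinite V] [Nonempty A]
    (ar : F → ℕ) (I : (f : F) → (Fin (ar f) → A) → A) (lt : A → A → Prop)
    (lt_irrefl : ∀ a, ¬ lt a a) (lt_trans : Transitive lt)
    (lt_wf : WellFounded lt)
    (hmono : WeaklyMonotone ar I lt)
    (prec : F → F → Prop) (prec_refl : ∀ f, prec f f)
    (prec_trans : ∀ f g h, prec f g → prec g h → prec f h) :
    -- `⊒∼` is a quasi-order on non-variable terms
    (∀ t : Term F ar V, t.IsApp → QGE ar I lt prec t t) ∧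
    Transitive (QGE (V := V) ar I lt prec) ∧
    -- `⊐` is a strict order
    (∀ s : Term F ar V, ¬ QGT ar I lt prec s s) ∧
    Transitive (QGT (V := V) ar I lt prec) ∧
    -- compatibility `⊒∼ ∘ ⊐ ∘ ⊒∼ ⊆ ⊐`
    (∀ s t u v : Term F ar V, QGE ar I lt prec s t → QGT ar I lt prec t u →
      QGE ar I lt prec u v → QGT ar I lt prec s v) ∧
    -- stability
    ClosedSubst (QGE (V := V) ar I lt prec) ∧
    ClosedSubst (QGT (V := V) ar I lt prec) := by
  have hα : Nonempty (V → A) := ⟨fun _ => Classical.arbitrary A⟩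
  -- composition facts
  have geg : ∀ s t u : Term F ar V, GEA ar I lt s t → GTA ar I lt t u → GTA ar I lt s u := by
    intro s t u h1 h2 α
    rcases h1 α with h | h
    · exact lt_trans (h2 α) h
    · rw [← h]; exact h2 α
  have gge : ∀ s t u : Term F ar V, GTA ar I lt s t → GEA ar I lt t u → GTA ar I lt s u := by
    intro s t u h1 h2 α
    rcases h2 α with h | h
    · exact lt_trans h (h1 α)
    · rw [h]; exact h1 α
  have gee : ∀ s t u : Term F ar V, GEA ar I lt s t → GEA ar I lt t u → GEA ar I lt s u := by
    intro s t u h1 h2 α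
    rcases h1 α with h1' | h1' <;> rcases h2 α with h2' | h2'
    · exact Or.inl (lt_trans h2' h1')
    · rw [h2']; exact Or.inl h1'
    · rw [← h1']; exact Or.inl h2'
    · exact Or.inr (h2'.trans h1')
  have gta_gea : ∀ s t : Term F ar V, GTA ar I lt s t → GEA ar I lt s t :=
    fun s t h α => Or.inl (h α)
  refine ⟨?_, ?_, ?_, ?_, ?_, ?_, ?_⟩
  · -- reflexivity of QGE on apps
    rintro (⟨v⟩ | ⟨f, ss⟩) ht
    · exact ht.elim
    · exact ⟨f, ss, f, ss, rfl, rfl, Or.inr ⟨fun α => Or.inr rfl, prec_refl f⟩⟩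
  · -- transitivity of QGE
    rintro s t u ⟨f, ss, g, ts, rfl, rfl, h1⟩ ⟨g', ts', h', us, heq, rfl, h2⟩
    injection heq with hg hts
    subst hg
    have hts' := eq_of_heq hts
    subst hts'
    refine ⟨f, ss, h', us, rfl, rfl, ?_⟩
    rcases h1 with h1 | ⟨h1, hp1⟩ <;> rcases h2 with h2 | ⟨h2, hp2⟩
    · exact Or.inl (gge _ _ _ h1 (gta_gea _ _ h2))
    · exact Or.inl (gge _ _ _ h1 h2)
    · exact Or.inl (geg _ _ _ h1 h2)
    · exact Or.inr ⟨gee _ _ _ h1 h2, prec_trans _ _ _ hp1 hp2⟩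
  · -- irreflexivity of QGT
    rintro s ⟨f, ss, g, ts, rfl, heq, h⟩
    rcases h with h | ⟨_, hp, hnp⟩
    · obtain ⟨α⟩ := hα
      exact lt_irrefl _ (h α)
    · obtain ⟨rfl⟩ : f = g := by injection heq
      exact hnp hp
  · -- transitivity of QGT
    rintro s t u ⟨f, ss, g, ts, rfl, rfl, h1⟩ ⟨g', ts', h', us, heq, rfl, h2⟩
    injection heq with hg hts
    subst hg
    have hts' := eq_of_heq hts
    subst hts'
    refine ⟨f, ss, h', us, rfl, rfl, ?_⟩
    rcases h1 with h1 | ⟨h1, hp1, hn1⟩ <;> rcases h2 with h2 | ⟨h2, hp2, hn2⟩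
    · exact Or.inl (gge _ _ _ h1 (gta_gea _ _ h2))
    · exact Or.inl (gge _ _ _ h1 h2)
    · exact Or.inl (geg _ _ _ h1 h2)
    · refine Or.inr ⟨gee _ _ _ h1 h2, prec_trans _ _ _ hp1 hp2, fun hc => hn2 (prec_trans _ _ _ hc hp1)⟩
  · -- compatibility
    rintro s t u v ⟨f, ss, g, ts, rfl, rfl, h1⟩ ⟨g', ts', h', us, heq, heq2, h2⟩
      ⟨h'', us', k, vs, heq3, rfl, h3⟩
    subst heq2
    injection heq with hg hts
    subst hg
    have hts' := eq_of_heq hts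
    subst hts'
    have heq4 := heq3
    injection heq4 with hh hus
    subst hh
    have hus' := eq_of_heq hus
    subst hus'

    refine ⟨f, ss, k, vs, rfl, rfl, ?_⟩
    have ge1 : GEA ar I lt (Term.app f ss) (Term.app g ts) := by
      rcases h1 with h | ⟨h, _⟩; exacts [gta_gea _ _ h, h]
    have ge3 : GEA ar I lt (Term.app h' us) (Term.app k vs) := by
      rcases h3 with h | ⟨h, _⟩; exacts [gta_gea _ _ h, h]
    rcases h2 with h2 | ⟨h2, hp2, hn2⟩
    · exact Or.inl (gge _ _ _ (geg _ _ _ ge1 h2) ge3)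
    · rcases h1 with h1 | ⟨h1, hp1⟩
      · exact Or.inl (gge _ _ _ (gge _ _ _ h1 h2) ge3)
      rcases h3 with h3 | ⟨h3, hp3⟩
      · exact Or.inl (geg _ _ _ (gee _ _ _ h1 h2) h3)
      · refine Or.inr ⟨gee _ _ _ h1 (gee _ _ _ h2 h3),
          prec_trans _ _ _ hp1 (prec_trans _ _ _ hp2 hp3), fun hc => ?_⟩
        exact hn2 (prec_trans _ _ _ hp3 (prec_trans _ _ _ hc hp1))
  · -- ClosedSubst QGE
    rintro σ s t ⟨f, ss, g, ts, rfl, rfl, h⟩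
    refine ⟨f, fun i => (ss i).subst σ, g, fun i => (ts i).subst σ, rfl, rfl, ?_⟩
    rcases h with h | ⟨h, hp⟩
    · exact Or.inl (fun α => by
        simpa only [eval_subst] using h (fun v => (σ v).eval I α))
    · exact Or.inr ⟨fun α => by
        simpa only [eval_subst] using h (fun v => (σ v).eval I α), hp⟩
  · -- ClosedSubst QGT
    rintro σ s t ⟨f, ss, g, ts, rfl, rfl, h⟩
    refine ⟨f, fun i => (ss i).subst σ, g, fun i => (ts i).subst σ, rfl, rfl, ?_⟩
    rcases h with h | ⟨h, hp⟩
    · exact Or.inl (fun α => by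
        simpa only [eval_subst] using h (fun v => (σ v).eval I α))
    · exact Or.inr ⟨fun α => by
        simpa only [eval_subst] using h (fun v => (σ v).eval I α), hp.1, hp.2⟩
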